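/- arXiv:2305.01721 — 2 statements merged into one kernel-verified Lean document; each statement's English description precedes it below -/
import Mathlib

section
/- Let n, d be positive integers with d ≥ 2. Then there exists a reduced decision rule system S such that n(S) = 2n + d, k(S) = 1, d(S) = d, |S| = n + 1, and L_ESR(S) ≥ 2^n. -/
/- Common formal framework for decision rule systems and decision trees /
   acyclic decision graphs, following Durdymyradov & Moshkov. -/

attribute [local instance] Classical.propDecidable

noncomputable section

namespace DRS

/-- A decision rule `(a_{i₁}=δ₁) ∧ ⋯ ∧ (a_{i_m}=δ_m) → σ`:
`K` is the finite set of equations (attribute index, value), `rhs` is σ. -/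
structure Rule where
  K : Finset (ℕ × ℕ)
  rhs : ℕ

/-- Well-formedness of a rule: the attributes on its left-hand side are pairwise different. -/
def Rule.WF (r : Rule) : Prop := ∀ p ∈ r.K, ∀ q ∈ r.K, p.1 = q.1 → p = q

/-- A(r): the set of attributes of a rule. -/
def Rule.attrs (r : Rule) : Finset ℕ := r.K.image Prod.fst

/-- The length m of a rule. -/
def Rule.len (r : Rule) : ℕ := r.K.card

/-- A(S) -/
def attrs (S : Finset Rule) : Finset ℕ := S.biUnion Rule.attrs

/-- n(S) -/
def nPar (S : Finset Rule) : ℕ := (attrs S).card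

/-- d(S): the maximum length of a rule of S. -/
def dPar (S : Finset Rule) : ℕ := S.sup Rule.len

/-- D(S): the set of right-hand sides. -/
def rhsSet (S : Finset Rule) : Finset ℕ := S.image Rule.rhs

/-- V_S(a_i) -/
def VS (S : Finset Rule) (i : ℕ) : Finset ℕ :=
  ((S.biUnion Rule.K).filter fun p => p.1 = i).image Prod.snd

/-- k(S) -/
def kPar (S : Finset Rule) : ℕ := (attrs S).sup fun i => (VS S i).card

/-- Attribute values in trees are `Option ℕ`; `none` plays the role of the special value `*`.
`allowed S false i` is (the lift of) `V_S(a_i)`, and `allowed S true i` is `EV_S(a_i)`. -/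
def allowed (S : Finset Rule) (ext : Bool) (i : ℕ) : Finset (Option ℕ) :=
  (VS S i).image some ∪ (if ext then {none} else ∅)

/-- Consistency of an equation system over ω ∪ {*}. -/
def ConsistentE (E : Finset (ℕ × Option ℕ)) : Prop :=
  ∀ p ∈ E, ∀ q ∈ E, p.1 = q.1 → p.2 = q.2

/-- Lift the left-hand side of a rule to an equation system over ω ∪ {*}. -/
def liftK (K : Finset (ℕ × ℕ)) : Finset (ℕ × Option ℕ) :=
  K.image fun p => (p.1, some p.2)

/-- A finite directed labeled graph: the nodes are `0, …, n-1`, with a distinguished root,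
each node carries either an attribute (working node) or a set of rules (terminal node),
and edges are labeled with elements of ω ∪ {*}. -/
structure DGraph where
  n : ℕ
  root : ℕ
  label : ℕ → ℕ ⊕ Finset Rule
  edges : Finset (ℕ × Option ℕ × ℕ)

namespace DGraph

def step (G : DGraph) (u v : ℕ) : Prop := ∃ l, (u, l, v) ∈ G.edges

/-- The graph has no directed cycles. -/
def Acyclic (G : DGraph) : Prop := ∀ v, ¬ Relation.TransGen G.step v v

/-- A node is terminal if no edge leaves it. -/
def IsTerminal (G : DGraph) (v : ℕ) : Prop := ∀ e ∈ G.edges, e.1 ≠ v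

/-- The set of rules attached to a (terminal) node. -/
def termSet (G : DGraph) (v : ℕ) : Finset Rule :=
  Sum.elim (fun _ => (∅ : Finset Rule)) id (G.label v)

/-- `G` is an acyclic decision graph over the rule system `S`;
`ext = false` : branching over `V_S` (o-type), `ext = true` : branching over `EV_S` (e-type).
Terminal nodes are labeled with subsets of S; each working node is labeled with an
attribute `a` of `A(S)` and has exactly one leaving edge for every element of
`V_S(a)` (resp. `EV_S(a)`), the edges leaving it being labeled with these
pairwise different elements. -/
def IsDG (G : DGraph) (S : Finset Rule) (ext : Bool) : Prop :=
  G.root < G.n ∧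
  (∀ e ∈ G.edges, e.1 < G.n ∧ e.2.2 < G.n) ∧
  G.Acyclic ∧
  (∀ v < G.n,
    if G.IsTerminal v then
      ∃ Z : Finset Rule, G.label v = Sum.inr Z ∧ Z ⊆ S
    else
      ∃ a : ℕ, G.label v = Sum.inl a ∧ a ∈ attrs S ∧
        (∀ l : Option ℕ, (∃ w, (v, l, w) ∈ G.edges) ↔ l ∈ allowed S ext a) ∧
        (∀ l w w', (v, l, w) ∈ G.edges → (v, l, w') ∈ G.edges → w = w'))

/-- `G` is a finite directed tree with root: the root has no entering edge and every
other node has exactly one entering edge (together with acyclicity this makes the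
graph a rooted tree). -/
def IsTree (G : DGraph) : Prop :=
  (∀ e ∈ G.edges, e.2.2 ≠ G.root) ∧
  (∀ v < G.n, v ≠ G.root → ∃! e, e ∈ G.edges ∧ e.2.2 = v)

/-- `chainFrom G v p t`: the list `p` of (node, leaving-edge-label) pairs forms a
directed path in `G` starting at `v` and ending at `t`. -/
def chainFrom (G : DGraph) : ℕ → List (ℕ × Option ℕ) → ℕ → Prop
  | v, [], t => v = t
  | v, e :: rest, t => e.1 = v ∧ ∃ w, (v, e.2, w) ∈ G.edges ∧ chainFrom G w rest t

/-- A complete path: from the root to a terminal node; it is recorded by the list of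
its working nodes with the labels of the edges taken, together with its terminal node. -/
def IsCompletePath (G : DGraph) (p : List (ℕ × Option ℕ)) (t : ℕ) : Prop :=
  G.chainFrom G.root p t ∧ G.IsTerminal t ∧ t < G.n

/-- K(ξ): the equation system associated with a complete path. -/
def pathEqs (G : DGraph) (p : List (ℕ × Option ℕ)) : Finset (ℕ × Option ℕ) :=
  (p.filterMap fun e =>
    Sum.elim (fun a => some (a, e.2)) (fun _ => none) (G.label e.1)).toFinset

/-- L(Γ): the number of nodes. -/
def size (G : DGraph) : ℕ := G.n

/-- T(Γ): the number of terminal nodes labeled with pairwise different sets of rules. -/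
def tCount (G : DGraph) : ℕ :=
  (((Finset.range G.n).filter fun v => G.IsTerminal v).image fun v => G.termSet v).card

/-- h(Γ): the maximum number of working nodes on a complete path. -/
def depth (G : DGraph) : ℕ :=
  sSup {m | ∃ p t, G.IsCompletePath p t ∧ p.length = m}

/-- Path conditions for (the solutions of) the problems All Rules / EAll Rules. -/
def SolvesAR (G : DGraph) (S : Finset Rule) : Prop :=
  ∀ p t, G.IsCompletePath p t → ConsistentE (G.pathEqs p) →
    (∀ r ∈ G.termSet t, liftK r.K ⊆ G.pathEqs p) ∧
    (∀ r ∈ S, r ∉ G.termSet t → ¬ ConsistentE (liftK r.K ∪ G.pathEqs p))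

/-- Path conditions for the problems All Decisions / EAll Decisions. -/
def SolvesAD (G : DGraph) (S : Finset Rule) : Prop :=
  ∀ p t, G.IsCompletePath p t → ConsistentE (G.pathEqs p) →
    (∀ r ∈ G.termSet t, liftK r.K ⊆ G.pathEqs p) ∧
    (∀ r ∈ S, r ∉ G.termSet t → r.rhs ∉ (G.termSet t).image Rule.rhs →
      ¬ ConsistentE (liftK r.K ∪ G.pathEqs p))

/-- Path conditions for the problems Some Rules / ESome Rules. -/
def SolvesSR (G : DGraph) (S : Finset Rule) : Prop :=
  ∀ p t, G.IsCompletePath p t → ConsistentE (G.pathEqs p) →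
    (∀ r ∈ G.termSet t, liftK r.K ⊆ G.pathEqs p) ∧
    (G.termSet t = ∅ → ∀ r ∈ S, ¬ ConsistentE (liftK r.K ∪ G.pathEqs p))

end DGraph

/-- Γ is a decision tree over S solving AR(S) (an o-tree). -/
def TreeSolvesAR (S : Finset Rule) (G : DGraph) : Prop :=
  G.IsDG S false ∧ G.IsTree ∧ G.SolvesAR S
/-- Γ is a decision tree over S solving EAR(S) (an e-tree). -/
def TreeSolvesEAR (S : Finset Rule) (G : DGraph) : Prop :=
  G.IsDG S true ∧ G.IsTree ∧ G.SolvesAR S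
/-- Γ is a decision tree over S solving AD(S) (an o-tree). -/
def TreeSolvesAD (S : Finset Rule) (G : DGraph) : Prop :=
  G.IsDG S false ∧ G.IsTree ∧ G.SolvesAD S
/-- Γ is a decision tree over S solving EAD(S) (an e-tree). -/
def TreeSolvesEAD (S : Finset Rule) (G : DGraph) : Prop :=
  G.IsDG S true ∧ G.IsTree ∧ G.SolvesAD S
/-- Γ is a decision tree over S solving SR(S) (an o-tree). -/
def TreeSolvesSR (S : Finset Rule) (G : DGraph) : Prop :=
  G.IsDG S false ∧ G.IsTree ∧ G.SolvesSR S
/-- Γ is a decision tree over S solving ESR(S) (an e-tree). -/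
def TreeSolvesESR (S : Finset Rule) (G : DGraph) : Prop :=
  G.IsDG S true ∧ G.IsTree ∧ G.SolvesSR S

/-- L_AR(S): minimum number of nodes of a decision tree over S solving AR(S). -/
def L_AR (S : Finset Rule) : ℕ := sInf {m | ∃ G : DGraph, TreeSolvesAR S G ∧ G.size = m}
def L_EAR (S : Finset Rule) : ℕ := sInf {m | ∃ G : DGraph, TreeSolvesEAR S G ∧ G.size = m}
def L_AD (S : Finset Rule) : ℕ := sInf {m | ∃ G : DGraph, TreeSolvesAD S G ∧ G.size = m}
def L_EAD (S : Finset Rule) : ℕ := sInf {m | ∃ G : DGraph, TreeSolvesEAD S G ∧ G.size = m}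
def L_SR (S : Finset Rule) : ℕ := sInf {m | ∃ G : DGraph, TreeSolvesSR S G ∧ G.size = m}
def L_ESR (S : Finset Rule) : ℕ := sInf {m | ∃ G : DGraph, TreeSolvesESR S G ∧ G.size = m}

/-- T_AR(S): minimum number of differently-labeled terminal nodes of a decision tree
over S solving AR(S); similarly for the other problems. -/
def T_AR (S : Finset Rule) : ℕ := sInf {m | ∃ G : DGraph, TreeSolvesAR S G ∧ G.tCount = m}
def T_EAR (S : Finset Rule) : ℕ := sInf {m | ∃ G : DGraph, TreeSolvesEAR S G ∧ G.tCount = m}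
def T_AD (S : Finset Rule) : ℕ := sInf {m | ∃ G : DGraph, TreeSolvesAD S G ∧ G.tCount = m}
def T_EAD (S : Finset Rule) : ℕ := sInf {m | ∃ G : DGraph, TreeSolvesEAD S G ∧ G.tCount = m}
def T_SR (S : Finset Rule) : ℕ := sInf {m | ∃ G : DGraph, TreeSolvesSR S G ∧ G.tCount = m}
def T_ESR (S : Finset Rule) : ℕ := sInf {m | ∃ G : DGraph, TreeSolvesESR S G ∧ G.tCount = m}

/-- h_AR(S): minimum depth of a decision tree over S solving AR(S); similarly for the others. -/
def h_AR (S : Finset Rule) : ℕ := sInf {m | ∃ G : DGraph, TreeSolvesAR S G ∧ G.depth = m}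
def h_EAR (S : Finset Rule) : ℕ := sInf {m | ∃ G : DGraph, TreeSolvesEAR S G ∧ G.depth = m}
def h_AD (S : Finset Rule) : ℕ := sInf {m | ∃ G : DGraph, TreeSolvesAD S G ∧ G.depth = m}
def h_EAD (S : Finset Rule) : ℕ := sInf {m | ∃ G : DGraph, TreeSolvesEAD S G ∧ G.depth = m}
def h_SR (S : Finset Rule) : ℕ := sInf {m | ∃ G : DGraph, TreeSolvesSR S G ∧ G.depth = m}
def h_ESR (S : Finset Rule) : ℕ := sInf {m | ∃ G : DGraph, TreeSolvesESR S G ∧ G.depth = m}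

/-- L^DG_SR(S): minimum number of nodes of an acyclic decision graph solving SR(S). -/
def LDG_SR (S : Finset Rule) : ℕ :=
  sInf {m | ∃ G : DGraph, G.IsDG S false ∧ G.SolvesSR S ∧ G.size = m}
/-- L^DG_ESR(S): minimum number of nodes of an acyclic decision graph solving ESR(S). -/
def LDG_ESR (S : Finset Rule) : ℕ :=
  sInf {m | ∃ G : DGraph, G.IsDG S true ∧ G.SolvesSR S ∧ G.size = m}

/-- A node cover of the hypergraph G(S). -/
def IsNodeCover (S : Finset Rule) (B : Finset ℕ) : Prop :=
  B ⊆ attrs S ∧ ∀ r ∈ S, (Rule.attrs r).Nonempty → (Rule.attrs r ∩ B).Nonempty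

/-- β(S): the minimum cardinality of a node cover of the hypergraph G(S). -/
def beta (S : Finset Rule) : ℕ := sInf {c | ∃ B, IsNodeCover S B ∧ B.card = c}

/-- S⁺: the subsystem of S consisting of all rules of length d(S). -/
def Splus (S : Finset Rule) : Finset Rule := S.filter fun r => r.len = dPar S

/-- β⁺(S) = β(S⁺). -/
def betaPlus (S : Finset Rule) : ℕ := beta (Splus S)

/-- The rule r_α : delete from the left-hand side of r all equations belonging to α. -/
def Rule.restrict (r : Rule) (α : Finset (ℕ × Option ℕ)) : Rule :=
  ⟨r.K.filter fun p => (p.1, some p.2) ∉ α, r.rhs⟩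

/-- S_α : the system of the rules r_α for all r ∈ S with K(r) ∪ α consistent. -/
def restrict (S : Finset Rule) (α : Finset (ℕ × Option ℕ)) : Finset Rule :=
  (S.filter fun r => ConsistentE (liftK r.K ∪ α)).image fun r => r.restrict α

/-- E_C(S): consistent equation systems whose attributes are in A(S) and whose
values belong to V_S (ext = false) resp. EV_S (ext = true). -/
def ESys (S : Finset Rule) (ext : Bool) : Set (Finset (ℕ × Option ℕ)) :=
  {α | ConsistentE α ∧ ∀ p ∈ α, p.1 ∈ attrs S ∧ p.2 ∈ allowed S ext p.1}

/-- I_SR(S). -/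
def I_SR (S : Finset Rule) : Finset Rule :=
  if ∃ r ∈ S, r.len = 0 then S.filter fun r => r.len = 0 else S

/-- D₀(S): the right-hand sides of the rules of S of length 0. -/
def D0 (S : Finset Rule) : Finset ℕ := (S.filter fun r => r.len = 0).image Rule.rhs

/-- I_AD(S). -/
def I_AD (S : Finset Rule) : Finset Rule :=
  S.filter fun r => r.len = 0 ∨ r.rhs ∉ D0 S

def betaC (S : Finset Rule) (ext : Bool) : ℕ :=
  sSup {b | ∃ α ∈ ESys S ext, beta (restrict S α) = b}
def betaCplus (S : Finset Rule) (ext : Bool) : ℕ :=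
  sSup {b | ∃ α ∈ ESys S ext, betaPlus (restrict S α) = b}
def betaI (S : Finset Rule) (I : Finset Rule → Finset Rule) : ℕ :=
  sSup {b | ∃ α ∈ ESys S true, beta (I (restrict S α)) = b}
def betaIplus (S : Finset Rule) (I : Finset Rule → Finset Rule) : ℕ :=
  sSup {b | ∃ α ∈ ESys S true, betaPlus (I (restrict S α)) = b}

def beta_AR (S : Finset Rule) : ℕ := betaC S false
def beta_AD (S : Finset Rule) : ℕ := betaC S false
def beta_SR (S : Finset Rule) : ℕ := betaC S false
def beta_EAR (S : Finset Rule) : ℕ := betaC S true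
def beta_ARplus (S : Finset Rule) : ℕ := betaCplus S false
def beta_ADplus (S : Finset Rule) : ℕ := betaCplus S false
def beta_SRplus (S : Finset Rule) : ℕ := betaCplus S false
def beta_EARplus (S : Finset Rule) : ℕ := betaCplus S true
def beta_EAD (S : Finset Rule) : ℕ := betaI S I_AD
def beta_EADplus (S : Finset Rule) : ℕ := betaIplus S I_AD
def beta_ESR (S : Finset Rule) : ℕ := betaI S I_SR
def beta_ESRplus (S : Finset Rule) : ℕ := betaIplus S I_SR

/-- R_SR(S). -/
def R_SR (S : Finset Rule) : Finset Rule :=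
  S.filter fun r => ¬ ∃ r' ∈ S, r'.K ⊂ r.K

/-- R_AD(S). -/
def R_AD (S : Finset Rule) : Finset Rule :=
  S.filter fun r => ¬ ∃ r' ∈ S, r'.K ⊂ r.K ∧ r'.rhs = r.rhs

/-- A reduced decision rule system. -/
def Reduced (S : Finset Rule) : Prop :=
  attrs S ⊆ Finset.range (nPar S + 1) ∧
  rhsSet S ⊆ Finset.range ((rhsSet S).card + 1) ∧
  (∀ i ∈ attrs S, VS S i ⊆ Finset.range (kPar S + 1)) ∧
  1 ≤ dPar S

/-- Length of the binary representation of a natural number. -/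
def bitLen (m : ℕ) : ℕ := max 1 (Nat.size m)

/-- The length of the word "(a⟨i⟩=⟨δ⟩)" encoding one equation. -/
def eqLen (p : ℕ × ℕ) : ℕ := 4 + bitLen p.1 + bitLen p.2

/-- The length of the word encoding one rule (with the "∧" signs and "→"). -/
def Rule.wordLen (r : Rule) : ℕ :=
  (∑ p ∈ r.K, eqLen p) + (r.K.card - 1) + 1 + bitLen r.rhs

/-- size(S): the length of the word representing S (with ";" separating the rules). -/
def sizeS (S : Finset Rule) : ℕ := (∑ r ∈ S, r.wordLen) + (S.card - 1)

/-!
The system consists of the rules `a_j = 0 ∧ a_{n+j} = 0 → 0` for `j < n` and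
`a_{2n} = 0 ∧ ⋯ ∧ a_{2n+d-1} = 0 → 0`, all attributes taking only the value `0`.
For `B ⊆ {0, …, n-1}` follow, in an e-tree solving ESR, the branch giving `a_j` the value `0`
iff `j ∈ B`, `a_{n+j}` the value `0` iff `j ∉ B`, and `*` to every other attribute. This branch
falsifies every rule, so its leaf is labeled `∅` and the path has to refute each rule; for
`j ∈ B` the only way to refute `a_j = 0 ∧ a_{n+j} = 0 → 0` is the equation `a_{n+j} = *`.
Hence different sets `B` end in different leaves, and there are at least `2^n` nodes.
The complete binary e-tree over all attributes shows that solving trees exist at all, without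
which `L_ESR` would be the junk value `sInf ∅ = 0`.
-/

lemma Rule.WF.consistentE_liftK {r : Rule} (h : r.WF) : ConsistentE (liftK r.K) := by
  simp only [ConsistentE, liftK, Finset.mem_image]
  rintro _ ⟨e, he, rfl⟩ _ ⟨f, hf, rfl⟩ hef
  rw [h e he f hf hef]

lemma exists_conflict_of_not_consistentE_union {A B : Finset (ℕ × Option ℕ)}
    (hA : ConsistentE A) (hB : ConsistentE B) (h : ¬ ConsistentE (A ∪ B)) :
    ∃ a ∈ A, ∃ b ∈ B, a.1 = b.1 ∧ a.2 ≠ b.2 := by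
  simp only [ConsistentE, Finset.mem_union, not_forall] at h
  obtain ⟨a, ha | ha, b, hb | hb, hab, hne⟩ := h
  · exact absurd (hA a ha b hb hab) hne
  · exact ⟨a, ha, b, hb, hab, hne⟩
  · exact ⟨b, hb, a, ha, hab.symm, Ne.symm hne⟩
  · exact absurd (hB a ha b hb hab) hne

namespace DGraph

def AgreesWith (G : DGraph) (p : List (ℕ × Option ℕ)) (σ : ℕ → Option ℕ) : Prop :=
  ∀ q ∈ G.pathEqs p, q.2 = σ q.1

variable {G : DGraph} {S : Finset Rule} {ext : Bool}

lemma pathEqs_cons_of_label_eq {u a : ℕ} (h : G.label u = Sum.inl a) (l : Option ℕ)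
    (p : List (ℕ × Option ℕ)) : G.pathEqs ((u, l) :: p) = insert (a, l) (G.pathEqs p) := by
  simp [DGraph.pathEqs, h]

lemma AgreesWith.consistentE {p : List (ℕ × Option ℕ)} {σ : ℕ → Option ℕ}
    (h : G.AgreesWith p σ) : ConsistentE (G.pathEqs p) := by
  intro q hq q' hq' heq
  rw [h q hq, h q' hq', heq]

lemma termSet_eq_of_label_eq {v : ℕ} {Z : Finset Rule} (h : G.label v = Sum.inr Z) :
    G.termSet v = Z := by
  simp [DGraph.termSet, h]

lemma termSet_subset (hdg : G.IsDG S ext) {t : ℕ} (ht : G.IsTerminal t) (htn : t < G.n) :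
    G.termSet t ⊆ S := by
  have hnode := hdg.2.2.2 t htn
  rw [if_pos ht] at hnode
  obtain ⟨Z, hZ, hZS⟩ := hnode
  rwa [termSet_eq_of_label_eq hZ]

def descendants (G : DGraph) (v : ℕ) : Finset ℕ :=
  (Finset.range G.n).filter (Relation.TransGen G.step v)

lemma card_descendants_lt (hdg : G.IsDG S ext) {v w : ℕ} {l : Option ℕ}
    (h : (v, l, w) ∈ G.edges) : (G.descendants w).card < (G.descendants v).card := by
  have hvw : G.step v w := ⟨l, h⟩
  refine Finset.card_lt_card ⟨fun x hx => ?_, fun hsub => ?_⟩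
  · simp only [descendants, Finset.mem_filter] at hx ⊢
    exact ⟨hx.1, .head hvw hx.2⟩
  · have hw : w ∈ G.descendants v := by
      simp only [descendants, Finset.mem_filter, Finset.mem_range]
      exact ⟨(hdg.2.1 _ h).2, .single hvw⟩
    exact hdg.2.2.1 w (Finset.mem_filter.1 (hsub hw)).2

theorem exists_chainFrom_agreesWith (hdg : G.IsDG S ext) (σ : ℕ → Option ℕ)
    (hσ : ∀ a ∈ attrs S, σ a ∈ allowed S ext a) (v : ℕ) (hv : v < G.n) :
    ∃ p t, G.chainFrom v p t ∧ G.IsTerminal t ∧ t < G.n ∧ G.AgreesWith p σ := by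
  by_cases hterm : G.IsTerminal v
  · exact ⟨[], v, rfl, hterm, hv, by simp [AgreesWith, DGraph.pathEqs]⟩
  have hnode := hdg.2.2.2 v hv
  rw [if_neg hterm] at hnode
  obtain ⟨a, hla, ha, hedges, -⟩ := hnode
  obtain ⟨w, hw⟩ := (hedges (σ a)).2 (hσ a ha)
  have := card_descendants_lt hdg hw
  obtain ⟨p, t, hchain, ht, htn, hagree⟩ :=
    exists_chainFrom_agreesWith hdg σ hσ w (hdg.2.1 _ hw).2
  refine ⟨(v, σ a) :: p, t, ⟨rfl, w, hw, hchain⟩, ht, htn, fun q hq => ?_⟩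
  rw [pathEqs_cons_of_label_eq hla] at hq
  rcases Finset.mem_insert.1 hq with rfl | hq
  exacts [rfl, hagree q hq]
termination_by (G.descendants v).card

lemma chainFrom_append_singleton {v t : ℕ} (p : List (ℕ × Option ℕ))
    (e : ℕ × Option ℕ) :
    G.chainFrom v (p ++ [e]) t ↔ G.chainFrom v p e.1 ∧ (e.1, e.2, t) ∈ G.edges := by
  induction p generalizing v with
  | nil =>
    constructor
    · rintro ⟨rfl, w, hw, rfl⟩
      exact ⟨rfl, hw⟩
    · rintro ⟨rfl, hw⟩
      exact ⟨rfl, t, hw, rfl⟩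
  | cons f p ih =>
    constructor
    · rintro ⟨rfl, w, hw, hc⟩
      exact ⟨⟨rfl, w, hw, (ih.1 hc).1⟩, (ih.1 hc).2⟩
    · rintro ⟨⟨rfl, w, hw, hc⟩, he⟩
      exact ⟨rfl, w, hw, ih.2 ⟨hc, he⟩⟩

lemma ne_root_of_chainFrom_append (htree : G.IsTree) {t : ℕ} {p : List (ℕ × Option ℕ)}
    {e : ℕ × Option ℕ} (h : G.chainFrom G.root (p ++ [e]) t) : t ≠ G.root :=
  htree.1 _ ((chainFrom_append_singleton p e).1 h).2

theorem chainFrom_root_unique (hdg : G.IsDG S ext) (htree : G.IsTree)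
    {p q : List (ℕ × Option ℕ)} {t : ℕ} (hp : G.chainFrom G.root p t)
    (hq : G.chainFrom G.root q t) : p = q := by
  induction p using List.reverseRecOn generalizing q t with
  | nil =>
    rcases List.eq_nil_or_concat' q with rfl | ⟨q, f, rfl⟩
    · rfl
    · exact absurd hp.symm (ne_root_of_chainFrom_append htree hq)
  | append_singleton p e ih =>
    rcases List.eq_nil_or_concat' q with rfl | ⟨q, f, rfl⟩
    · exact absurd hq.symm (ne_root_of_chainFrom_append htree hp)
    obtain ⟨hp', he⟩ := (chainFrom_append_singleton p e).1 hp
    obtain ⟨hq', hf⟩ := (chainFrom_append_singleton q f).1 hq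
    obtain ⟨_, -, hunique⟩ := htree.2 t (hdg.2.1 _ he).2 (htree.1 _ he)
    have hef : (e.1, e.2, t) = (f.1, f.2, t) :=
      (hunique _ ⟨he, rfl⟩).trans (hunique _ ⟨hf, rfl⟩).symm
    obtain rfl : e = f := by simpa [Prod.ext_iff] using hef
    rw [ih hp' hq']

theorem card_le_size (hdg : G.IsDG S ext) (htree : G.IsTree) {ι : Type*} (s : Finset ι)
    (σ : ι → ℕ → Option ℕ)
    (hσ : ∀ i ∈ s, ∀ a ∈ attrs S, σ i a ∈ allowed S ext a)
    (hsep : ∀ i ∈ s, ∀ j ∈ s, ∀ p t, G.IsCompletePath p t → G.AgreesWith p (σ i) →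
      G.AgreesWith p (σ j) → i = j) :
    s.card ≤ G.size := by
  have hpath : ∀ i ∈ s, ∃ p t, G.IsCompletePath p t ∧ G.AgreesWith p (σ i) := by
    intro i hi
    obtain ⟨p, t, hc, ht, htn, hagree⟩ :=
      exists_chainFrom_agreesWith hdg (σ i) (hσ i hi) G.root hdg.1
    exact ⟨p, t, ⟨hc, ht, htn⟩, hagree⟩
  choose! path leaf hcomplete hagree using hpath
  calc s.card ≤ (Finset.range G.n).card := by
        refine Finset.card_le_card_of_injOn leaf
          (fun i hi => Finset.mem_range.2 (hcomplete i hi).2.2) fun i hi j hj hij => ?_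
        have hpath_eq : path i = path j :=
          chainFrom_root_unique hdg htree (hcomplete i hi).1 (hij ▸ (hcomplete j hj).1)
        exact hsep i hi j hj _ _ (hcomplete i hi) (hagree i hi) (hpath_eq ▸ hagree j hj)
    _ = G.size := Finset.card_range _

theorem SolvesSR.exists_refuting_mem_pathEqs (hsol : G.SolvesSR S) (hdg : G.IsDG S ext)
    (hwf : ∀ r ∈ S, r.WF) {p : List (ℕ × Option ℕ)} {t : ℕ} {σ : ℕ → Option ℕ}
    (hcp : G.IsCompletePath p t) (hagree : G.AgreesWith p σ)
    (hfalse : ∀ r ∈ S, ∃ e ∈ r.K, σ e.1 ≠ some e.2) :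
    ∀ r ∈ S, ∃ e ∈ r.K, σ e.1 ≠ some e.2 ∧ (e.1, σ e.1) ∈ G.pathEqs p := by
  obtain ⟨hsound, hcomplete⟩ := hsol p t hcp hagree.consistentE
  have hempty : G.termSet t = ∅ := by
    refine Finset.eq_empty_of_forall_notMem fun r hr => ?_
    obtain ⟨e, he, hne⟩ := hfalse r (termSet_subset hdg hcp.2.1 hcp.2.2 hr)
    exact hne (hagree _ (hsound r hr (Finset.mem_image_of_mem _ he))).symm
  intro r hr
  obtain ⟨_, ha, b, hb, hab, hne⟩ := exists_conflict_of_not_consistentE_union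
    (hwf r hr).consistentE_liftK hagree.consistentE (hcomplete hempty r hr)
  obtain ⟨e, he, rfl⟩ := Finset.mem_image.1 ha
  have hb2 : b.2 = σ e.1 := (hagree b hb).trans (congrArg σ hab.symm)
  refine ⟨e, he, hb2 ▸ Ne.symm hne, ?_⟩
  rwa [← hb2, hab, Prod.mk.eta]

end DGraph

/-- For `u ≥ 1`, the binary digits of `u` after its leading one, read as equations
`(position, value)` with digit `0` standing for the value `0` and digit `1` for `*`. -/
def digitEqs (u : ℕ) : Finset (ℕ × Option ℕ) :=
  if h : u < 2 then ∅
  else insert (Nat.log 2 (u / 2), if u % 2 = 1 then none else some 0) (digitEqs (u / 2))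
decreasing_by omega

lemma digitEqs_one : digitEqs 1 = ∅ := by
  simp [digitEqs]

lemma digitEqs_two_mul_add {u c : ℕ} (hu : 1 ≤ u) (hc : c < 2) :
    digitEqs (2 * u + c) = insert (Nat.log 2 u, if c = 1 then none else some 0) (digitEqs u) := by
  rw [digitEqs, dif_neg (by omega)]
  have hdiv : (2 * u + c) / 2 = u := by omega
  have hmod : (2 * u + c) % 2 = c := by omega
  rw [hdiv, hmod]

lemma exists_mem_digitEqs (u : ℕ) : ∀ i < Nat.log 2 u, ∃ x, (i, x) ∈ digitEqs u := by
  induction u using Nat.strong_induction_on with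
  | _ u ih =>
    intro i hi
    have hu : 2 ≤ u := by
      by_contra h
      rw [Nat.log_of_lt (by omega)] at hi
      omega
    have hlog : Nat.log 2 (u / 2) = Nat.log 2 u - 1 := Nat.log_div_base 2 u
    rw [digitEqs, dif_neg (by omega)]
    rcases lt_or_eq_of_le (Nat.le_sub_one_of_lt hi) with hlt | rfl
    · obtain ⟨x, hx⟩ := ih (u / 2) (by omega) i (hlog ▸ hlt)
      exact ⟨x, Finset.mem_insert_of_mem hx⟩
    · rw [← hlog]
      exact ⟨_, Finset.mem_insert_self _ _⟩

/-- The complete binary e-tree of depth `N`, stored as a heap: node `v` sits at depth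
`log₂ (v + 1)` and queries the attribute with that index, its children are `2v + 1`
(edge `0`) and `2v + 2` (edge `*`), and `digitEqs (v + 1)` is the equation system of the path
to `v`. -/
def fullTree (S : Finset Rule) (N : ℕ) : DGraph where
  n := 2 * 2 ^ N - 1
  root := 0
  label v := if v < 2 ^ N - 1 then Sum.inl (Nat.log 2 (v + 1))
    else Sum.inr (S.filter fun r => liftK r.K ⊆ digitEqs (v + 1))
  edges := (Finset.range (2 ^ N - 1)).biUnion fun v =>
    {(v, some 0, 2 * v + 1), (v, none, 2 * v + 2)}

section FullTree

variable {S : Finset Rule} {N : ℕ}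

lemma mem_fullTree_edges {v w : ℕ} {l : Option ℕ} :
    (v, l, w) ∈ (fullTree S N).edges ↔
      v < 2 ^ N - 1 ∧ (l = some 0 ∧ w = 2 * v + 1 ∨ l = none ∧ w = 2 * v + 2) := by
  simp only [fullTree, Finset.mem_biUnion, Finset.mem_range, Finset.mem_insert,
    Finset.mem_singleton, Prod.mk.injEq]
  constructor
  · rintro ⟨v, hv, ⟨rfl, h⟩ | ⟨rfl, h⟩⟩ <;> simp_all
  · rintro ⟨hv, h⟩
    exact ⟨v, hv, by tauto⟩

lemma fullTree_label_of_lt {v : ℕ} (hv : v < 2 ^ N - 1) :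
    (fullTree S N).label v = Sum.inl (Nat.log 2 (v + 1)) := by
  simp [fullTree, hv]

lemma fullTree_label_of_le {v : ℕ} (hv : 2 ^ N - 1 ≤ v) :
    (fullTree S N).label v = Sum.inr (S.filter fun r => liftK r.K ⊆ digitEqs (v + 1)) := by
  simp [fullTree, not_lt.2 hv]

lemma fullTree_isTerminal_iff {v : ℕ} : (fullTree S N).IsTerminal v ↔ 2 ^ N - 1 ≤ v := by
  constructor
  · intro h
    by_contra hv
    exact h (v, some 0, 2 * v + 1) (mem_fullTree_edges.2 ⟨by omega, by simp⟩) rfl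
  · rintro hv ⟨u, l, w⟩ he rfl
    have := (mem_fullTree_edges.1 he).1
    omega

lemma digitEqs_of_mem_fullTree_edges {v w : ℕ} {l : Option ℕ}
    (h : (v, l, w) ∈ (fullTree S N).edges) :
    digitEqs (w + 1) = insert (Nat.log 2 (v + 1), l) (digitEqs (v + 1)) := by
  rcases (mem_fullTree_edges.1 h).2 with ⟨rfl, rfl⟩ | ⟨rfl, rfl⟩
  · rw [show 2 * v + 1 + 1 = 2 * (v + 1) + 0 by ring, digitEqs_two_mul_add (by omega) (by omega)]
    rfl
  · rw [show 2 * v + 2 + 1 = 2 * (v + 1) + 1 by ring, digitEqs_two_mul_add (by omega) (by omega)]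
    rfl

lemma digitEqs_subset_union_pathEqs {p : List (ℕ × Option ℕ)} {v t : ℕ}
    (h : (fullTree S N).chainFrom v p t) :
    digitEqs (t + 1) ⊆ digitEqs (v + 1) ∪ (fullTree S N).pathEqs p := by
  induction p generalizing v with
  | nil =>
    cases h
    exact Finset.subset_union_left
  | cons e p ih =>
    obtain ⟨rfl, w, hw, hchain⟩ := h
    have hlabel := fullTree_label_of_lt (S := S) (mem_fullTree_edges.1 hw).1
    rw [DGraph.pathEqs_cons_of_label_eq hlabel]
    refine (ih hchain).trans ?_
    rw [digitEqs_of_mem_fullTree_edges hw]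
    intro x hx
    simp only [Finset.mem_union, Finset.mem_insert] at hx ⊢
    tauto

lemma fullTree_step_lt {a b : ℕ} (h : (fullTree S N).step a b) : a < b := by
  obtain ⟨l, hl⟩ := h
  have := mem_fullTree_edges.1 hl
  omega

lemma fullTree_isDG (hattrs : attrs S = Finset.range N) (hVS : ∀ i < N, VS S i = {0}) :
    (fullTree S N).IsDG S true := by
  have hpos := Nat.one_le_two_pow (n := N)
  refine ⟨show 0 < 2 * 2 ^ N - 1 by omega, fun ⟨v, l, w⟩ he => ?_, fun v hv => ?_,
    fun v hv => ?_⟩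
  · have := mem_fullTree_edges.1 he
    exact ⟨show v < 2 * 2 ^ N - 1 by omega, show w < 2 * 2 ^ N - 1 by omega⟩
  · have hlt : Relation.TransGen (· < ·) v v :=
      Relation.TransGen.mono (fun _ _ h => fullTree_step_lt h) v v hv
    rw [Relation.transGen_eq_self] at hlt
    exact lt_irrefl v hlt
  split_ifs with hterm
  · exact ⟨_, fullTree_label_of_le (fullTree_isTerminal_iff.1 hterm), Finset.filter_subset _ _⟩
  have hv : v < 2 ^ N - 1 := by
    by_contra h
    exact hterm (fullTree_isTerminal_iff.2 (by omega))
  have hlog : Nat.log 2 (v + 1) < N := Nat.log_lt_of_lt_pow (by omega) (by omega)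
  refine ⟨_, fullTree_label_of_lt hv, hattrs ▸ Finset.mem_range.2 hlog, fun l => ?_,
    fun l w w' hw hw' => ?_⟩
  · simp only [allowed, hVS _ hlog, mem_fullTree_edges, hv, true_and, if_true]
    cases l <;> simp
  · rcases (mem_fullTree_edges.1 hw).2 with ⟨rfl, rfl⟩ | ⟨rfl, rfl⟩ <;>
      rcases (mem_fullTree_edges.1 hw').2 with ⟨h, rfl⟩ | ⟨h, rfl⟩ <;> simp_all

lemma fullTree_isTree : (fullTree S N).IsTree := by
  refine ⟨fun ⟨v, l, w⟩ he => ?_, fun w hw hroot => ?_⟩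
  · have := mem_fullTree_edges.1 he
    show w ≠ 0
    omega
  have hw0 : w ≠ 0 := hroot
  have hwn : w < 2 * 2 ^ N - 1 := hw
  set v := (w - 1) / 2
  have hv : v < 2 ^ N - 1 := by omega
  obtain ⟨l, hl⟩ : ∃ l, (v, l, w) ∈ (fullTree S N).edges := by
    rcases Nat.even_or_odd w with hev | hodd
    · exact ⟨none, mem_fullTree_edges.2 ⟨hv, Or.inr ⟨rfl, by grind⟩⟩⟩
    · exact ⟨some 0, mem_fullTree_edges.2 ⟨hv, Or.inl ⟨rfl, by grind⟩⟩⟩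
  refine ⟨(v, l, w), ⟨hl, rfl⟩, fun ⟨v', l', w'⟩ ⟨he, hw'⟩ => ?_⟩
  obtain rfl : w' = w := hw'
  have h1 := mem_fullTree_edges.1 he
  have h2 := mem_fullTree_edges.1 hl
  obtain rfl : v' = v := by omega
  rcases h1.2 with ⟨rfl, h1⟩ | ⟨rfl, h1⟩ <;>
    rcases h2.2 with ⟨rfl, h2⟩ | ⟨rfl, h2⟩ <;> first | rfl | omega

lemma fullTree_solvesSR (hattrs : attrs S = Finset.range N) :
    (fullTree S N).SolvesSR S := by
  rintro p t ⟨hchain, hterm, htn⟩ -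
  have ht := fullTree_isTerminal_iff.1 hterm
  have hsub : digitEqs (t + 1) ⊆ (fullTree S N).pathEqs p := by
    have h := digitEqs_subset_union_pathEqs hchain
    rwa [show (fullTree S N).root + 1 = 1 from rfl, digitEqs_one, Finset.empty_union] at h
  have hlabel := DGraph.termSet_eq_of_label_eq (fullTree_label_of_le (S := S) ht)
  refine ⟨fun r hr => ?_, fun hempty r hr hcons => ?_⟩
  · rw [hlabel, Finset.mem_filter] at hr
    exact hr.2.trans hsub
  have hnot : ¬ liftK r.K ⊆ digitEqs (t + 1) := fun h => by
    have hmem : r ∈ (fullTree S N).termSet t := hlabel ▸ Finset.mem_filter.2 ⟨hr, h⟩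
    simp [hempty] at hmem
  obtain ⟨_, hq, hqn⟩ := Finset.not_subset.1 hnot
  obtain ⟨e, he, rfl⟩ := Finset.mem_image.1 hq
  have heN : e.1 < N := by
    rw [← Finset.mem_range, ← hattrs]
    exact Finset.mem_biUnion.2 ⟨r, hr, Finset.mem_image_of_mem _ he⟩
  have hdepth : Nat.log 2 (t + 1) = N := by
    have hpos := Nat.one_le_two_pow (n := N)
    have htn' : t < 2 * 2 ^ N - 1 := htn
    refine Nat.log_eq_of_pow_le_of_lt_pow (by omega) ?_
    rw [pow_succ]
    omega
  obtain ⟨x, hx⟩ := exists_mem_digitEqs (t + 1) e.1 (hdepth ▸ heN)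
  have hxe : x ≠ some e.2 := fun h => hqn (h ▸ hx)
  exact hxe (hcons _ (Finset.mem_union_right _ (hsub hx)) _ (Finset.mem_union_left _ hq) rfl)

theorem exists_treeSolvesESR (hattrs : attrs S = Finset.range N)
    (hVS : ∀ i < N, VS S i = {0}) : ∃ G, TreeSolvesESR S G :=
  ⟨fullTree S N, fullTree_isDG hattrs hVS, fullTree_isTree, fullTree_solvesSR hattrs⟩

end FullTree

lemma attrs_eq_image_biUnion (S : Finset Rule) : attrs S = (S.biUnion Rule.K).image Prod.fst := by
  rw [attrs, Finset.biUnion_image]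
  rfl

def pairRule (n j : ℕ) : Rule := ⟨{(j, 0), (n + j, 0)}, 0⟩

def blockRule (n d : ℕ) : Rule := ⟨(Finset.range d).image fun i => (2 * n + i, 0), 0⟩

def hardSystem (n d : ℕ) : Finset Rule :=
  insert (blockRule n d) ((Finset.range n).image (pairRule n))

section HardSystem

variable {n d : ℕ}

lemma biUnion_K_hardSystem :
    (hardSystem n d).biUnion Rule.K = (Finset.range (2 * n + d)).image fun i => (i, 0) := by
  ext ⟨i, δ⟩
  simp only [hardSystem, pairRule, blockRule, Finset.biUnion_insert, Finset.mem_union,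
    Finset.mem_image, Finset.mem_biUnion, Finset.mem_range, Finset.mem_insert,
    Finset.mem_singleton, Prod.mk.injEq, exists_exists_and_eq_and]
  constructor
  · rintro (⟨k, hk, rfl, rfl⟩ | ⟨j, hj, ⟨rfl, rfl⟩ | ⟨rfl, rfl⟩⟩)
    exacts [⟨2 * n + k, by omega, rfl, rfl⟩, ⟨i, by omega, rfl, rfl⟩,
      ⟨n + j, by omega, rfl, rfl⟩]
  · rintro ⟨i, hi, rfl, rfl⟩
    by_cases h₁ : i < n
    · exact Or.inr ⟨i, h₁, Or.inl ⟨rfl, rfl⟩⟩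
    by_cases h₂ : i < 2 * n
    · exact Or.inr ⟨i - n, by omega, Or.inr ⟨by omega, rfl⟩⟩
    · exact Or.inl ⟨i - 2 * n, by omega, by omega, rfl⟩

lemma snd_eq_zero_of_mem_hardSystem {r : Rule} (hr : r ∈ hardSystem n d) {e : ℕ × ℕ}
    (he : e ∈ r.K) : e.2 = 0 := by
  have : e ∈ (hardSystem n d).biUnion Rule.K := Finset.mem_biUnion.2 ⟨r, hr, he⟩
  rw [biUnion_K_hardSystem] at this
  obtain ⟨i, -, rfl⟩ := Finset.mem_image.1 this
  rfl

lemma wf_of_mem_hardSystem {r : Rule} (hr : r ∈ hardSystem n d) : r.WF :=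
  fun _ he _ hf hef => Prod.ext hef
    ((snd_eq_zero_of_mem_hardSystem hr he).trans (snd_eq_zero_of_mem_hardSystem hr hf).symm)

lemma attrs_hardSystem : attrs (hardSystem n d) = Finset.range (2 * n + d) := by
  rw [attrs_eq_image_biUnion, biUnion_K_hardSystem, Finset.image_image]
  exact Finset.image_id

lemma VS_hardSystem {i : ℕ} (hi : i < 2 * n + d) : VS (hardSystem n d) i = {0} := by
  ext δ
  simp only [VS, biUnion_K_hardSystem, Finset.mem_image, Finset.mem_filter, Finset.mem_range,
    Finset.mem_singleton]
  constructor
  · rintro ⟨_, ⟨⟨k, -, rfl⟩, -⟩, rfl⟩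
    rfl
  · rintro rfl
    exact ⟨(i, 0), ⟨⟨i, hi, rfl⟩, rfl⟩, rfl⟩

lemma nPar_hardSystem : nPar (hardSystem n d) = 2 * n + d := by
  rw [nPar, attrs_hardSystem, Finset.card_range]

lemma kPar_hardSystem (hd : 1 ≤ d) : kPar (hardSystem n d) = 1 := by
  rw [kPar, attrs_hardSystem]
  have hcard : ∀ i ∈ Finset.range (2 * n + d), (VS (hardSystem n d) i).card = 1 :=
    fun i hi => by
      rw [VS_hardSystem (Finset.mem_range.1 hi), Finset.card_singleton]
  rw [Finset.sup_congr rfl hcard]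
  exact Finset.sup_const ⟨0, Finset.mem_range.2 (by omega)⟩ 1

lemma len_blockRule : (blockRule n d).len = d := by
  rw [Rule.len, blockRule, Finset.card_image_of_injective _ fun a b h => by simpa using h,
    Finset.card_range]

lemma dPar_hardSystem (hd : 2 ≤ d) : dPar (hardSystem n d) = d := by
  rw [dPar, hardSystem, Finset.sup_insert, len_blockRule, sup_eq_left, Finset.sup_le_iff]
  intro r hr
  obtain ⟨j, -, rfl⟩ := Finset.mem_image.1 hr
  exact (Finset.card_insert_le _ _).trans hd

lemma card_hardSystem (hd : 1 ≤ d) : (hardSystem n d).card = n + 1 := by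
  have hinj : Set.InjOn (pairRule n) (Finset.range n) := fun a ha b hb h => by
    have : (a, 0) ∈ (pairRule n b).K := h ▸ Finset.mem_insert_self _ _
    simp only [pairRule, Finset.mem_insert, Finset.mem_singleton, Prod.mk.injEq] at this
    simp only [Finset.coe_range, Set.mem_Iio] at ha hb
    omega
  rw [hardSystem, Finset.card_insert_of_notMem, Finset.card_image_of_injOn hinj,
    Finset.card_range]
  intro hmem
  obtain ⟨j, hj, hjeq⟩ := Finset.mem_image.1 hmem
  have : (2 * n, 0) ∈ (pairRule n j).K :=
    hjeq ▸ Finset.mem_image.2 ⟨0, Finset.mem_range.2 hd, rfl⟩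
  simp only [pairRule, Finset.mem_insert, Finset.mem_singleton, Prod.mk.injEq] at this
  have := Finset.mem_range.1 hj
  omega

lemma reduced_hardSystem (hd : 1 ≤ d) : Reduced (hardSystem n d) := by
  refine ⟨?_, fun x hx => ?_, fun i hi => ?_, ?_⟩
  · rw [attrs_hardSystem, nPar_hardSystem]
    exact Finset.range_subset_range.2 (Nat.le_succ _)
  · obtain ⟨r, hr, rfl⟩ := Finset.mem_image.1 hx
    have : r.rhs = 0 := by
      rcases Finset.mem_insert.1 hr with rfl | hr
      · rfl
      · obtain ⟨j, -, rfl⟩ := Finset.mem_image.1 hr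
        rfl
    simp [this]
  · rw [attrs_hardSystem] at hi
    rw [VS_hardSystem (Finset.mem_range.1 hi), kPar_hardSystem hd]
    simp
  · calc 1 ≤ d := hd
      _ = (blockRule n d).len := len_blockRule.symm
      _ ≤ dPar (hardSystem n d) := Finset.le_sup (Finset.mem_insert_self _ _)

end HardSystem

def branchAssignment (n : ℕ) (B : Finset ℕ) (i : ℕ) : Option ℕ :=
  if i < n ∧ i ∈ B ∨ n ≤ i ∧ i < 2 * n ∧ i - n ∉ B then some 0 else none

section LowerBound

variable {n d : ℕ}

lemma branchAssignment_of_lt {B : Finset ℕ} {j : ℕ} (hj : j < n) :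
    branchAssignment n B j = if j ∈ B then some 0 else none := by
  by_cases hjB : j ∈ B <;> simp [branchAssignment, hj, hjB]

lemma branchAssignment_add {B : Finset ℕ} {j : ℕ} (hj : j < n) :
    branchAssignment n B (n + j) = if j ∈ B then none else some 0 := by
  have : n + j < 2 * n := by omega
  by_cases hjB : j ∈ B <;> simp [branchAssignment, hjB, this]

lemma branchAssignment_of_le {B : Finset ℕ} {i : ℕ} (hi : 2 * n ≤ i) :
    branchAssignment n B i = none := by
  rw [branchAssignment, if_neg]
  rintro (⟨h, -⟩ | ⟨-, h, -⟩) <;> omega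

lemma branchAssignment_mem_allowed (B : Finset ℕ) {i : ℕ} (hi : i ∈ attrs (hardSystem n d)) :
    branchAssignment n B i ∈ allowed (hardSystem n d) true i := by
  rw [attrs_hardSystem, Finset.mem_range] at hi
  simp only [allowed, VS_hardSystem hi, branchAssignment]
  split_ifs <;> simp

lemma branchAssignment_falsifies (hd : 1 ≤ d) (B : Finset ℕ) :
    ∀ r ∈ hardSystem n d, ∃ e ∈ r.K, branchAssignment n B e.1 ≠ some e.2 := by
  intro r hr
  rcases Finset.mem_insert.1 hr with rfl | hr
  · exact ⟨(2 * n, 0), Finset.mem_image.2 ⟨0, Finset.mem_range.2 hd, rfl⟩,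
      by simp [branchAssignment_of_le]⟩
  obtain ⟨j, hj, rfl⟩ := Finset.mem_image.1 hr
  have hj := Finset.mem_range.1 hj
  by_cases hjB : j ∈ B
  · exact ⟨(n + j, 0), by simp [pairRule], by simp [branchAssignment_add hj, hjB]⟩
  · exact ⟨(j, 0), by simp [pairRule], by simp [branchAssignment_of_lt hj, hjB]⟩

lemma subset_of_agreesWith_branchAssignment {G : DGraph} (hd : 1 ≤ d)
    (hdg : G.IsDG (hardSystem n d) true) (hsol : G.SolvesSR (hardSystem n d))
    {B B' : Finset ℕ} (hB : B ⊆ Finset.range n) {p : List (ℕ × Option ℕ)} {t : ℕ}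
    (hcp : G.IsCompletePath p t) (hagree : G.AgreesWith p (branchAssignment n B))
    (hagree' : G.AgreesWith p (branchAssignment n B')) : B ⊆ B' := by
  intro j hjB
  have hj := Finset.mem_range.1 (hB hjB)
  have hrule : pairRule n j ∈ hardSystem n d :=
    Finset.mem_insert_of_mem (Finset.mem_image_of_mem _ (Finset.mem_range.2 hj))
  obtain ⟨e, he, hne, hmem⟩ := hsol.exists_refuting_mem_pathEqs hdg
    (fun _ => wf_of_mem_hardSystem) hcp hagree (branchAssignment_falsifies hd B) _ hrule
  simp only [pairRule, Finset.mem_insert, Finset.mem_singleton] at he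
  rcases he with rfl | rfl
  · simp [branchAssignment_of_lt hj, hjB] at hne
  · have hstar := hagree' _ hmem
    by_contra hjB'
    simp [branchAssignment_add hj, hjB, hjB'] at hstar

theorem two_pow_le_L_ESR_hardSystem (hd : 1 ≤ d) : 2 ^ n ≤ L_ESR (hardSystem n d) := by
  obtain ⟨G₀, hG₀⟩ := exists_treeSolvesESR (attrs_hardSystem (n := n) (d := d))
    fun _ => VS_hardSystem
  refine le_csInf ⟨_, G₀, hG₀, rfl⟩ ?_
  rintro _ ⟨G, ⟨hdg, htree, hsol⟩, rfl⟩
  calc 2 ^ n = (Finset.range n).powerset.card := by simp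
    _ ≤ G.size := by
      refine DGraph.card_le_size hdg htree _ (branchAssignment n)
        (fun B _ _ => branchAssignment_mem_allowed B) fun B hB B' hB' p t hcp h h' => ?_
      rw [Finset.mem_powerset] at hB hB'
      exact (subset_of_agreesWith_branchAssignment hd hdg hsol hB hcp h h').antisymm
        (subset_of_agreesWith_branchAssignment hd hdg hsol hB' hcp h' h)

end LowerBound

theorem statement_3_general (n d : ℕ) (hd : 2 ≤ d) :
    ∃ S : Finset Rule, S.Nonempty ∧ (∀ r ∈ S, r.WF) ∧ Reduced S ∧
      nPar S = 2 * n + d ∧ kPar S = 1 ∧ dPar S = d ∧ S.card = n + 1 ∧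
      2 ^ n ≤ L_ESR S := by
  have hd₁ : 1 ≤ d := by omega
  exact ⟨hardSystem n d, Finset.insert_nonempty _ _, fun _ => wf_of_mem_hardSystem,
    reduced_hardSystem hd₁, nPar_hardSystem, kPar_hardSystem hd₁, dPar_hardSystem hd,
    card_hardSystem hd₁, two_pow_le_L_ESR_hardSystem hd₁⟩

/-- Lemma 10: for positive n, d with d ≥ 2 there is a reduced system S with
n(S) = 2n + d, k(S) = 1, d(S) = d, |S| = n + 1 and L_ESR(S) ≥ 2^n. -/
theorem statement_3 (n d : ℕ) (hn : 0 < n) (hd : 2 ≤ d) :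
    ∃ S : Finset Rule, S.Nonempty ∧ (∀ r ∈ S, r.WF) ∧ Reduced S ∧
      nPar S = 2 * n + d ∧ kPar S = 1 ∧ dPar S = d ∧ S.card = n + 1 ∧
      2 ^ n ≤ L_ESR S :=
  statement_3_general n d hd

end DRS

end
end

section
/- Let S be a decision rule system with d(S) = 1, i.e., every rule in S has length at most 1 and some rule has length 1. Then there exists an o-decision tree over S solving SR(S) with at most k(S) + 1 nodes, and there exists an e-decision tree over S solving ESR(S) with at most n(S)·(k(S) + 1) + 1 nodes; in particular, L_SR(S) ≤ k(S) + 1 and L_ESR(S) ≤ n(S)·(k(S) + 1) + 1. -/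
/- Common formal framework for decision rule systems and decision trees /
   acyclic decision graphs, following Durdymyradov & Moshkov. -/

attribute [local instance] Classical.propDecidable

noncomputable section

namespace DRS

/-! A rule of a system with `d(S) = 1` is either empty or a single equation `a = δ`.
For SR(S) it suffices to ask one attribute `a ∈ A(S)`: after the answer `δ ∈ V_S(a)` some rule
`a = δ` of `S` is realized, so the leaf holding the rules with `K(r) ⊆ {a = δ}` is not empty.
For ESR(S) the attributes of `A(S)` are asked one after another; an answer `δ ≠ *` stops at such
a leaf, and if every answer is `*`, no rule of positive length is consistent with the path and
the last leaf holds the rules of length 0. -/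

lemma mem_VS {S : Finset Rule} {i δ : ℕ} : δ ∈ VS S i ↔ ∃ r ∈ S, (i, δ) ∈ r.K := by
  simp only [VS, Finset.mem_image, Finset.mem_filter, Finset.mem_biUnion]
  constructor
  · rintro ⟨⟨x, y⟩, ⟨⟨r, hr, hK⟩, rfl⟩, rfl⟩
    exact ⟨r, hr, hK⟩
  · rintro ⟨r, hr, hK⟩
    exact ⟨(i, δ), ⟨⟨r, hr, hK⟩, rfl⟩, rfl⟩

lemma mem_attrs {S : Finset Rule} {a : ℕ} :
    a ∈ attrs S ↔ ∃ r ∈ S, ∃ δ, (a, δ) ∈ r.K := by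
  simp only [attrs, Rule.attrs, Finset.mem_biUnion, Finset.mem_image]
  constructor
  · rintro ⟨r, hr, ⟨x, y⟩, hK, rfl⟩
    exact ⟨r, hr, y, hK⟩
  · rintro ⟨r, hr, δ, hK⟩
    exact ⟨r, hr, (a, δ), hK, rfl⟩

lemma card_VS_le_kPar {S : Finset Rule} {a : ℕ} (ha : a ∈ attrs S) : (VS S a).card ≤ kPar S :=
  Finset.le_sup (f := fun i => (VS S i).card) ha

lemma some_mem_allowed {S : Finset Rule} {ext : Bool} {a δ : ℕ} :
    some δ ∈ allowed S ext a ↔ δ ∈ VS S a := by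
  cases ext <;> simp [allowed]

lemma none_mem_allowed {S : Finset Rule} {ext : Bool} {a : ℕ} :
    none ∈ allowed S ext a ↔ ext = true := by
  cases ext <;> simp [allowed]

lemma K_eq_singleton_of_dPar_eq_one {S : Finset Rule} {r : Rule} {p : ℕ × ℕ}
    (hd : dPar S = 1) (hr : r ∈ S) (hp : p ∈ r.K) : r.K = {p} := by
  have hle : r.K.card ≤ 1 := hd ▸ Finset.le_sup (f := Rule.len) hr
  exact Finset.eq_singleton_iff_unique_mem.mpr
    ⟨hp, fun q hq => Finset.card_le_one.mp hle q hq p hp⟩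

lemma attrs_nonempty_of_dPar_eq_one {S : Finset Rule} (hd : dPar S = 1) : (attrs S).Nonempty := by
  by_contra h
  have : dPar S = 0 := (Finset.sup_eq_bot_iff _ _).mpr fun r hr =>
    Finset.card_eq_zero.mpr <| Finset.eq_empty_of_forall_notMem fun p hp =>
      h ⟨p.1, mem_attrs.mpr ⟨r, hr, p.2, hp⟩⟩
  omega

lemma not_consistentE_of_mem {E : Finset (ℕ × Option ℕ)} {a : ℕ} {x y : Option ℕ}
    (hx : (a, x) ∈ E) (hy : (a, y) ∈ E) (hxy : x ≠ y) : ¬ ConsistentE E :=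
  fun h => hxy (h _ hx _ hy rfl)

namespace DGraph

variable {G : DGraph}

lemma acyclic_of_forall_lt (h : ∀ e ∈ G.edges, e.1 < e.2.2) : G.Acyclic := by
  intro v hv
  have hlt := Relation.TransGen.mono (p := (· < ·)) (fun u w ⟨_, hl⟩ => h _ hl) v v hv
  rw [Relation.transGen_eq_self] at hlt
  exact lt_irrefl v hlt

lemma chainFrom_of_isTerminal {v t : ℕ} {p : List (ℕ × Option ℕ)} (hv : G.IsTerminal v)
    (h : G.chainFrom v p t) : p = [] ∧ v = t := by
  cases p with
  | nil => exact ⟨rfl, h⟩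
  | cons e rest =>
    obtain ⟨-, w, hw, -⟩ := h
    exact absurd rfl (hv _ hw)

lemma pathEqs_cons {e : ℕ × Option ℕ} {rest : List (ℕ × Option ℕ)} {a : ℕ}
    (h : G.label e.1 = .inl a) : G.pathEqs (e :: rest) = insert (a, e.2) (G.pathEqs rest) := by
  simp [pathEqs, h]

end DGraph

def valueList (S : Finset Rule) (a : ℕ) : List ℕ := (VS S a).sort (· ≤ ·)

def value (S : Finset Rule) (a i : ℕ) : ℕ := (valueList S a).getD i 0

def leafRules (S : Finset Rule) (a δ : ℕ) : Finset Rule := S.filter fun r => r.K ⊆ {(a, δ)}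

section Values

variable {S : Finset Rule} {a : ℕ}

lemma length_valueList : (valueList S a).length = (VS S a).card := Finset.length_sort _

lemma length_valueList_pos (ha : a ∈ attrs S) : 0 < (valueList S a).length := by
  obtain ⟨r, hr, δ, hK⟩ := mem_attrs.mp ha
  exact length_valueList ▸ Finset.card_pos.mpr ⟨δ, mem_VS.mpr ⟨r, hr, hK⟩⟩

lemma value_mem_VS {i : ℕ} (hi : i < (valueList S a).length) : value S a i ∈ VS S a := by
  rw [value, List.getD_eq_getElem _ _ hi, ← Finset.mem_sort (· ≤ ·)]
  exact List.getElem_mem hi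

lemma exists_value_eq {δ : ℕ} (hδ : δ ∈ VS S a) :
    ∃ i < (valueList S a).length, value S a i = δ := by
  obtain ⟨i, hi, h⟩ := List.mem_iff_getElem.mp ((Finset.mem_sort (· ≤ ·)).mpr hδ)
  exact ⟨i, hi, (List.getD_eq_getElem _ _ hi).trans h⟩

lemma value_injective {i j : ℕ} (hi : i < (valueList S a).length)
    (hj : j < (valueList S a).length) (h : value S a i = value S a j) : i = j := by
  rw [value, value, List.getD_eq_getElem _ _ hi, List.getD_eq_getElem _ _ hj] at h
  exact (Finset.sort_nodup _ _).getElem_inj_iff.mp h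

lemma leafRules_nonempty {δ : ℕ} (hd : dPar S = 1) (hδ : δ ∈ VS S a) :
    (leafRules S a δ).Nonempty := by
  obtain ⟨r, hr, hK⟩ := mem_VS.mp hδ
  exact ⟨r, Finset.mem_filter.mpr ⟨hr, (K_eq_singleton_of_dPar_eq_one hd hr hK).subset⟩⟩

lemma liftK_subset_of_mem_leafRules {δ : ℕ} {r : Rule} {E : Finset (ℕ × Option ℕ)}
    (hr : r ∈ leafRules S a δ) (hE : (a, some δ) ∈ E) : liftK r.K ⊆ E := by
  intro q hq
  obtain ⟨p, hp, rfl⟩ := Finset.mem_image.mp hq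
  obtain rfl := Finset.mem_singleton.mp ((Finset.mem_filter.mp hr).2 hp)
  exact hE

end Values

def starTree (S : Finset Rule) (a : ℕ) : DGraph where
  n := (valueList S a).length + 1
  root := 0
  label v := if v = 0 then .inl a else .inr (leafRules S a (value S a (v - 1)))
  edges := (Finset.range (valueList S a).length).image fun i => (0, some (value S a i), i + 1)

section StarTree

variable {S : Finset Rule} {a : ℕ}

lemma mem_starTree_edges {e : ℕ × Option ℕ × ℕ} :
    e ∈ (starTree S a).edges ↔
      ∃ i < (valueList S a).length, e = (0, some (value S a i), i + 1) := by
  simp only [starTree, Finset.mem_image, Finset.mem_range, eq_comm]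

lemma starTree_isTerminal {v : ℕ} (hv : v ≠ 0) : (starTree S a).IsTerminal v := by
  intro e he
  obtain ⟨i, -, rfl⟩ := mem_starTree_edges.mp he
  exact hv.symm

lemma starTree_not_isTerminal_zero (ha : a ∈ attrs S) : ¬ (starTree S a).IsTerminal 0 :=
  fun h => h _ (mem_starTree_edges.mpr ⟨0, length_valueList_pos ha, rfl⟩) rfl

lemma starTree_exists_edge_iff {l : Option ℕ} :
    (∃ w, (0, l, w) ∈ (starTree S a).edges) ↔ l ∈ allowed S false a := by
  constructor
  · rintro ⟨w, hw⟩
    obtain ⟨i, hi, he⟩ := mem_starTree_edges.mp hw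
    simp only [Prod.mk.injEq] at he
    obtain ⟨-, rfl, -⟩ := he
    exact some_mem_allowed.mpr (value_mem_VS hi)
  · intro hl
    cases l with
    | none => exact absurd (none_mem_allowed.mp hl) Bool.false_ne_true
    | some δ =>
      obtain ⟨i, hi, rfl⟩ := exists_value_eq (some_mem_allowed.mp hl)
      exact ⟨i + 1, mem_starTree_edges.mpr ⟨i, hi, rfl⟩⟩

lemma starTree_edge_eq_of_label_eq {v w w' : ℕ} {l : Option ℕ}
    (hw : (v, l, w) ∈ (starTree S a).edges) (hw' : (v, l, w') ∈ (starTree S a).edges) :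
    w = w' := by
  obtain ⟨i, hi, he⟩ := mem_starTree_edges.mp hw
  obtain ⟨i', hi', he'⟩ := mem_starTree_edges.mp hw'
  simp only [Prod.mk.injEq] at he he'
  have := value_injective hi hi' (Option.some_injective _ (he.2.1.symm.trans he'.2.1))
  omega

lemma starTree_isDG (ha : a ∈ attrs S) : (starTree S a).IsDG S false := by
  refine ⟨Nat.succ_pos _, fun e he => ?_, DGraph.acyclic_of_forall_lt fun e he => ?_,
    fun v _ => ?_⟩
  · obtain ⟨i, hi, rfl⟩ := mem_starTree_edges.mp he
    exact ⟨Nat.succ_pos _, Nat.succ_lt_succ hi⟩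
  · obtain ⟨i, -, rfl⟩ := mem_starTree_edges.mp he
    exact Nat.succ_pos i
  · rcases eq_or_ne v 0 with rfl | hv
    · rw [if_neg (starTree_not_isTerminal_zero ha)]
      exact ⟨a, rfl, ha, fun l => starTree_exists_edge_iff,
        fun l w w' => starTree_edge_eq_of_label_eq⟩
    · rw [if_pos (starTree_isTerminal hv)]
      exact ⟨_, if_neg hv, Finset.filter_subset _ _⟩

lemma starTree_isTree : (starTree S a).IsTree := by
  refine ⟨fun e he => ?_, fun v hv hv0 => ?_⟩
  · obtain ⟨i, -, rfl⟩ := mem_starTree_edges.mp he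
    exact Nat.succ_ne_zero i
  · obtain ⟨i, rfl⟩ := Nat.exists_eq_succ_of_ne_zero hv0
    refine ⟨_, ⟨mem_starTree_edges.mpr ⟨i, Nat.succ_lt_succ_iff.mp hv, rfl⟩, rfl⟩, ?_⟩
    rintro e ⟨he, hev⟩
    obtain ⟨j, -, rfl⟩ := mem_starTree_edges.mp he
    obtain rfl : j = i := Nat.succ_injective hev
    rfl

lemma starTree_isCompletePath (ha : a ∈ attrs S) {p : List (ℕ × Option ℕ)} {t : ℕ}
    (h : (starTree S a).IsCompletePath p t) :
    ∃ i < (valueList S a).length,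
      t = i + 1 ∧ (a, some (value S a i)) ∈ (starTree S a).pathEqs p := by
  obtain ⟨hc, ht, -⟩ := h
  cases p with
  | nil =>
    subst hc
    exact absurd ht (starTree_not_isTerminal_zero ha)
  | cons e rest =>
    obtain ⟨he1, w, hw, hrest⟩ := hc
    obtain ⟨i, hi, he⟩ := mem_starTree_edges.mp hw
    simp only [Prod.mk.injEq] at he
    obtain ⟨-, he2, rfl⟩ := he
    obtain ⟨rfl, rfl⟩ :=
      DGraph.chainFrom_of_isTerminal (starTree_isTerminal i.succ_ne_zero) hrest
    refine ⟨i, hi, rfl, ?_⟩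
    rw [DGraph.pathEqs_cons (a := a) (by rw [he1]; rfl), he2]
    exact Finset.mem_insert_self _ _

lemma starTree_solvesSR (hd : dPar S = 1) (ha : a ∈ attrs S) : (starTree S a).SolvesSR S := by
  intro p t hp _
  obtain ⟨i, hi, rfl, hmem⟩ := starTree_isCompletePath ha hp
  have hterm : (starTree S a).termSet (i + 1) = leafRules S a (value S a i) := rfl
  rw [hterm]
  exact ⟨fun r hr => liftK_subset_of_mem_leafRules hr hmem,
    fun h => absurd h (leafRules_nonempty hd (value_mem_VS hi)).ne_empty⟩

lemma starTree_size_le (ha : a ∈ attrs S) : (starTree S a).size ≤ kPar S + 1 :=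
  Nat.succ_le_succ (length_valueList (S := S) ▸ card_VS_le_kPar ha)

end StarTree

def attrAt (S : Finset Rule) (j : ℕ) : ℕ := ((attrs S).sort (· ≤ ·)).getD j 0

def fanout (S : Finset Rule) (j : ℕ) : ℕ := (valueList S (attrAt S j)).length

/-- The `j`-th working node of `chainTree S`; it is followed by the `fanout S j` leaves
`spineNode S j + 1 + i`, and `spineNode S (nPar S)` is the last leaf. -/
def spineNode (S : Finset Rule) (j : ℕ) : ℕ := ∑ x ∈ Finset.range j, (1 + fanout S x)

def blockOf (S : Finset Rule) (v : ℕ) : ℕ :=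
  Nat.findGreatest (fun j => spineNode S j ≤ v) (nPar S)

def chainTree (S : Finset Rule) : DGraph where
  n := spineNode S (nPar S) + 1
  root := 0
  label v :=
    if v = spineNode S (nPar S) then .inr (S.filter fun r => r.K = ∅)
    else if v = spineNode S (blockOf S v) then .inl (attrAt S (blockOf S v))
    else .inr (leafRules S (attrAt S (blockOf S v))
      (value S (attrAt S (blockOf S v)) (v - spineNode S (blockOf S v) - 1)))
  edges := (Finset.range (nPar S)).biUnion fun j =>
    insert (spineNode S j, none, spineNode S (j + 1))
      ((Finset.range (fanout S j)).image fun i =>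
        (spineNode S j, some (value S (attrAt S j) i), spineNode S j + 1 + i))

section ChainTree

variable {S : Finset Rule}

lemma length_sort_attrs : ((attrs S).sort (· ≤ ·)).length = nPar S := Finset.length_sort _

lemma attrAt_mem {j : ℕ} (hj : j < nPar S) : attrAt S j ∈ attrs S := by
  rw [← length_sort_attrs] at hj
  rw [attrAt, List.getD_eq_getElem _ _ hj, ← Finset.mem_sort (· ≤ ·)]
  exact List.getElem_mem hj

lemma exists_attrAt_eq {a : ℕ} (ha : a ∈ attrs S) : ∃ j < nPar S, attrAt S j = a := by
  obtain ⟨j, hj, h⟩ := List.mem_iff_getElem.mp ((Finset.mem_sort (· ≤ ·)).mpr ha)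
  exact ⟨j, length_sort_attrs (S := S) ▸ hj, (List.getD_eq_getElem _ _ hj).trans h⟩

lemma fanout_le_kPar {j : ℕ} (hj : j < nPar S) : fanout S j ≤ kPar S := by
  rw [fanout, length_valueList]
  exact card_VS_le_kPar (attrAt_mem hj)

lemma spineNode_succ (j : ℕ) : spineNode S (j + 1) = spineNode S j + 1 + fanout S j := by
  rw [spineNode, Finset.sum_range_succ, ← spineNode, add_assoc]

lemma spineNode_strictMono : StrictMono (spineNode S) :=
  strictMono_nat_of_lt_succ fun j => by rw [spineNode_succ]; omega

lemma spineNode_injective : Function.Injective (spineNode S) := spineNode_strictMono.injective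

lemma leaf_lt_spineNode_succ {j i : ℕ} (hi : i < fanout S j) :
    spineNode S j + 1 + i < spineNode S (j + 1) := by
  rw [spineNode_succ]; omega

lemma leaf_ne_spineNode {j i : ℕ} (hi : i < fanout S j) (j' : ℕ) :
    spineNode S j + 1 + i ≠ spineNode S j' := by
  intro h
  rcases le_or_gt j' j with h' | h'
  · have := spineNode_strictMono.monotone (f := spineNode S) h'
    omega
  · have := spineNode_strictMono.monotone (f := spineNode S) (show j + 1 ≤ j' from h')
    have := leaf_lt_spineNode_succ hi
    omega

lemma leaf_injective {j i j' i' : ℕ} (hi : i < fanout S j) (hi' : i' < fanout S j')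
    (h : spineNode S j + 1 + i = spineNode S j' + 1 + i') : j = j' ∧ i = i' := by
  have key : ∀ {j j' i i'}, i < fanout S j → j < j' →
      spineNode S j + 1 + i < spineNode S j' + 1 + i' := fun hi hjj' =>
    (leaf_lt_spineNode_succ hi).trans_le
      ((spineNode_strictMono.monotone (Nat.succ_le_of_lt hjj')).trans (by omega))
  rcases lt_trichotomy j j' with hlt | rfl | hgt
  · exact absurd h (key hi hlt).ne
  · omega
  · exact absurd h (key hi' hgt).ne'

lemma spineNode_cases {v N : ℕ} (hv : v ≤ spineNode S N) :
    v = spineNode S N ∨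
      ∃ j < N, v = spineNode S j ∨ ∃ i < fanout S j, v = spineNode S j + 1 + i := by
  induction N with
  | zero => exact .inl (Nat.le_zero.mp hv)
  | succ N ih =>
    rw [spineNode_succ] at hv
    by_cases h : v ≤ spineNode S N
    · rcases ih h with rfl | ⟨j, hj, hv'⟩
      · exact .inr ⟨N, N.lt_succ_self, .inl rfl⟩
      · exact .inr ⟨j, hj.trans N.lt_succ_self, hv'⟩
    · by_cases h' : v = spineNode S N + 1 + fanout S N
      · exact .inl (h'.trans (spineNode_succ N).symm)
      · exact .inr ⟨N, N.lt_succ_self, .inr ⟨v - spineNode S N - 1, by omega, by omega⟩⟩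

lemma blockOf_spineNode {j : ℕ} (hj : j ≤ nPar S) : blockOf S (spineNode S j) = j :=
  Nat.findGreatest_eq_iff.mpr ⟨hj, fun _ => le_rfl,
    fun _ hn _ hle => absurd hle (not_le.mpr (spineNode_strictMono hn))⟩

lemma blockOf_leaf {j i : ℕ} (hj : j < nPar S) (hi : i < fanout S j) :
    blockOf S (spineNode S j + 1 + i) = j :=
  Nat.findGreatest_eq_iff.mpr ⟨hj.le, fun _ => by omega, fun _ hn _ hle =>
    absurd hle (not_le.mpr ((leaf_lt_spineNode_succ hi).trans_le
      (spineNode_strictMono.monotone hn)))⟩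

lemma chainTree_label_last :
    (chainTree S).label (spineNode S (nPar S)) = .inr (S.filter fun r => r.K = ∅) :=
  if_pos rfl

lemma chainTree_label_spineNode {j : ℕ} (hj : j < nPar S) :
    (chainTree S).label (spineNode S j) = .inl (attrAt S j) := by
  have hne : spineNode S j ≠ spineNode S (nPar S) := spineNode_injective.ne hj.ne
  simp [chainTree, hne, blockOf_spineNode hj.le]

lemma chainTree_label_leaf {j i : ℕ} (hj : j < nPar S) (hi : i < fanout S j) :
    (chainTree S).label (spineNode S j + 1 + i) =
      .inr (leafRules S (attrAt S j) (value S (attrAt S j) i)) := by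
  simp only [chainTree, if_neg (leaf_ne_spineNode hi _), blockOf_leaf hj hi]
  congr 3
  omega

lemma mem_chainTree_edges {e : ℕ × Option ℕ × ℕ} :
    e ∈ (chainTree S).edges ↔ ∃ j < nPar S,
      (e = (spineNode S j, none, spineNode S (j + 1)) ∨
        ∃ i < fanout S j,
          e = (spineNode S j, some (value S (attrAt S j) i), spineNode S j + 1 + i)) := by
  simp only [chainTree, Finset.mem_biUnion, Finset.mem_range, Finset.mem_insert,
    Finset.mem_image, eq_comm (a := e)]

lemma chainTree_edge_lt {e : ℕ × Option ℕ × ℕ} (he : e ∈ (chainTree S).edges) :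
    e.1 < e.2.2 ∧ e.2.2 ≤ spineNode S (nPar S) := by
  obtain ⟨j, hj, rfl | ⟨i, hi, rfl⟩⟩ := mem_chainTree_edges.mp he
  · exact ⟨spineNode_strictMono j.lt_succ_self, spineNode_strictMono.monotone hj⟩
  · exact ⟨by simp only; omega,
      (leaf_lt_spineNode_succ hi).le.trans (spineNode_strictMono.monotone hj)⟩

lemma chainTree_isTerminal_last : (chainTree S).IsTerminal (spineNode S (nPar S)) :=
  fun e he h => by have := chainTree_edge_lt he; omega

lemma chainTree_isTerminal_leaf {j i : ℕ} (hi : i < fanout S j) :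
    (chainTree S).IsTerminal (spineNode S j + 1 + i) := by
  intro e he h
  obtain ⟨j', -, rfl | ⟨i', -, rfl⟩⟩ := mem_chainTree_edges.mp he <;>
    exact leaf_ne_spineNode hi j' h.symm

lemma chainTree_not_isTerminal_spineNode {j : ℕ} (hj : j < nPar S) :
    ¬ (chainTree S).IsTerminal (spineNode S j) :=
  fun h => h _ (mem_chainTree_edges.mpr ⟨j, hj, .inl rfl⟩) rfl

lemma chainTree_exists_edge_iff {j : ℕ} (hj : j < nPar S) {l : Option ℕ} :
    (∃ w, (spineNode S j, l, w) ∈ (chainTree S).edges) ↔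
      l ∈ allowed S true (attrAt S j) := by
  constructor
  · rintro ⟨w, hw⟩
    obtain ⟨j', -, he | ⟨i, hi, he⟩⟩ := mem_chainTree_edges.mp hw <;>
      simp only [Prod.mk.injEq] at he <;> obtain ⟨hjj', rfl, -⟩ := he
    · exact none_mem_allowed.mpr rfl
    · obtain rfl := spineNode_injective hjj'
      exact some_mem_allowed.mpr (value_mem_VS hi)
  · intro hl
    cases l with
    | none => exact ⟨_, mem_chainTree_edges.mpr ⟨j, hj, .inl rfl⟩⟩
    | some δ =>
      obtain ⟨i, hi, rfl⟩ := exists_value_eq (some_mem_allowed.mp hl)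
      exact ⟨_, mem_chainTree_edges.mpr ⟨j, hj, .inr ⟨i, hi, rfl⟩⟩⟩

lemma chainTree_edge_eq_of_label_eq {v w w' : ℕ} {l : Option ℕ}
    (hw : (v, l, w) ∈ (chainTree S).edges) (hw' : (v, l, w') ∈ (chainTree S).edges) :
    w = w' := by
  obtain ⟨j, -, he | ⟨i, hi, he⟩⟩ := mem_chainTree_edges.mp hw <;>
    obtain ⟨j', -, he' | ⟨i', hi', he'⟩⟩ := mem_chainTree_edges.mp hw' <;>
    simp only [Prod.mk.injEq] at he he' <;>
    obtain ⟨rfl, rfl, rfl⟩ := he <;> obtain ⟨hjj', hl, rfl⟩ := he'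
  · rw [spineNode_injective hjj']
  · exact absurd hl (Option.some_ne_none _).symm
  · exact absurd hl (Option.some_ne_none _)
  · obtain rfl := spineNode_injective hjj'
    rw [value_injective hi hi' (Option.some_injective _ hl)]

lemma chainTree_edge_eq_of_target_eq {e e' : ℕ × Option ℕ × ℕ}
    (he : e ∈ (chainTree S).edges) (he' : e' ∈ (chainTree S).edges) (h : e.2.2 = e'.2.2) :
    e = e' := by
  obtain ⟨j, -, rfl | ⟨i, hi, rfl⟩⟩ := mem_chainTree_edges.mp he <;>
    obtain ⟨j', -, rfl | ⟨i', hi', rfl⟩⟩ := mem_chainTree_edges.mp he'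
  · obtain rfl := Nat.succ_injective (spineNode_injective h)
    rfl
  · exact absurd h.symm (leaf_ne_spineNode hi' _)
  · exact absurd h (leaf_ne_spineNode hi _)
  · obtain ⟨rfl, rfl⟩ := leaf_injective hi hi' h
    rfl

lemma chainTree_isDG : (chainTree S).IsDG S true := by
  refine ⟨Nat.succ_pos _, fun e he => ?_,
    DGraph.acyclic_of_forall_lt fun e he => (chainTree_edge_lt he).1, fun v hv => ?_⟩
  · have := chainTree_edge_lt he
    exact ⟨by show e.1 < spineNode S (nPar S) + 1; omega, Nat.lt_succ_of_le this.2⟩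
  · rcases spineNode_cases (Nat.le_of_lt_succ hv) with rfl | ⟨j, hj, rfl | ⟨i, hi, rfl⟩⟩
    · rw [if_pos chainTree_isTerminal_last]
      exact ⟨_, chainTree_label_last, Finset.filter_subset _ _⟩
    · rw [if_neg (chainTree_not_isTerminal_spineNode hj)]
      exact ⟨attrAt S j, chainTree_label_spineNode hj, attrAt_mem hj,
        fun l => chainTree_exists_edge_iff hj, fun l w w' => chainTree_edge_eq_of_label_eq⟩
    · rw [if_pos (chainTree_isTerminal_leaf hi)]
      exact ⟨_, chainTree_label_leaf hj hi, Finset.filter_subset _ _⟩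

lemma exists_chainTree_edge_to_spineNode {m : ℕ} (hm : m ≤ nPar S) (h0 : m ≠ 0) :
    ∃ e ∈ (chainTree S).edges, e.2.2 = spineNode S m := by
  obtain ⟨j, rfl⟩ := Nat.exists_eq_succ_of_ne_zero h0
  exact ⟨_, mem_chainTree_edges.mpr ⟨j, hm, .inl rfl⟩, rfl⟩

lemma chainTree_isTree : (chainTree S).IsTree := by
  refine ⟨fun e he h => by have := chainTree_edge_lt he; simp [chainTree] at h; omega,
    fun v hv hv0 => ?_⟩
  have hin : ∃ e ∈ (chainTree S).edges, e.2.2 = v := by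
    have hne : ∀ {m}, v = spineNode S m → m ≠ 0 := fun h hm => hv0 (by rw [h, hm]; rfl)
    rcases spineNode_cases (Nat.le_of_lt_succ hv) with h | ⟨j, hj, h | ⟨i, hi, rfl⟩⟩
    · exact h ▸ exists_chainTree_edge_to_spineNode le_rfl (hne h)
    · exact h ▸ exists_chainTree_edge_to_spineNode hj.le (hne h)
    · exact ⟨_, mem_chainTree_edges.mpr ⟨j, hj, .inr ⟨i, hi, rfl⟩⟩, rfl⟩
  obtain ⟨e, he, rfl⟩ := hin
  exact ⟨e, ⟨he, rfl⟩, fun e' ⟨he', h⟩ => chainTree_edge_eq_of_target_eq he' he h⟩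

lemma chainTree_chainFrom {j t : ℕ} {p : List (ℕ × Option ℕ)} (hj : j ≤ nPar S)
    (hc : (chainTree S).chainFrom (spineNode S j) p t) (ht : (chainTree S).IsTerminal t) :
    (t = spineNode S (nPar S) ∧
        ∀ x, j ≤ x → x < nPar S → (attrAt S x, none) ∈ (chainTree S).pathEqs p) ∨
      ∃ x < nPar S, ∃ i < fanout S x, t = spineNode S x + 1 + i ∧
        (attrAt S x, some (value S (attrAt S x) i)) ∈ (chainTree S).pathEqs p := by
  induction p generalizing j with
  | nil =>
    subst hc
    rcases hj.lt_or_eq with hj | rfl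
    · exact absurd ht (chainTree_not_isTerminal_spineNode hj)
    · exact .inl ⟨rfl, fun x hx hx' => absurd hx' (not_lt.mpr hx)⟩
  | cons e rest ih =>
    obtain ⟨he1, w, hw, hrest⟩ := hc
    obtain ⟨j', hj', he | ⟨i, hi, he⟩⟩ := mem_chainTree_edges.mp hw <;>
      simp only [Prod.mk.injEq] at he <;> obtain ⟨hjj', he2, rfl⟩ := he <;>
      obtain rfl := spineNode_injective hjj' <;>
      have hpe := DGraph.pathEqs_cons (rest := rest) (he1 ▸ chainTree_label_spineNode hj') <;>
      rw [he2] at hpe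
    · rcases ih hj' hrest with ⟨rfl, hall⟩ | ⟨x, hx, i, hi, rfl, hmem⟩
      · refine .inl ⟨rfl, fun x hx hx' => ?_⟩
        rw [hpe]
        rcases hx.lt_or_eq with hx | rfl
        · exact Finset.mem_insert_of_mem (hall x hx hx')
        · exact Finset.mem_insert_self _ _
      · exact .inr ⟨x, hx, i, hi, rfl, hpe ▸ Finset.mem_insert_of_mem hmem⟩
    · obtain ⟨rfl, rfl⟩ := DGraph.chainFrom_of_isTerminal (chainTree_isTerminal_leaf hi) hrest
      exact .inr ⟨j, hj', i, hi, rfl, hpe ▸ Finset.mem_insert_self _ _⟩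

lemma chainTree_solvesSR (hd : dPar S = 1) : (chainTree S).SolvesSR S := by
  rintro p t ⟨hc, ht, -⟩ -
  rcases chainTree_chainFrom (Nat.zero_le _) hc ht with
    ⟨rfl, hall⟩ | ⟨x, hx, i, hi, rfl, hmem⟩
  · have hterm : (chainTree S).termSet (spineNode S (nPar S)) = S.filter fun r => r.K = ∅ := by
      rw [DGraph.termSet, chainTree_label_last]; rfl
    rw [hterm]
    refine ⟨fun r hr => by simp [(Finset.mem_filter.mp hr).2, liftK], fun hempty r hr => ?_⟩
    obtain ⟨q, hq⟩ : r.K.Nonempty := Finset.nonempty_iff_ne_empty.mpr fun hK =>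
      Finset.notMem_empty r (hempty ▸ Finset.mem_filter.mpr ⟨hr, hK⟩)
    obtain ⟨x, hx, hxq⟩ := exists_attrAt_eq (mem_attrs.mpr ⟨r, hr, q.2, hq⟩)
    exact not_consistentE_of_mem (Finset.mem_union_left _ (Finset.mem_image_of_mem _ hq))
      (Finset.mem_union_right _ (hxq ▸ hall x (Nat.zero_le _) hx)) (Option.some_ne_none _)
  · rw [DGraph.termSet, chainTree_label_leaf hx hi]
    exact ⟨fun r hr => liftK_subset_of_mem_leafRules hr hmem,
      fun h => absurd h (leafRules_nonempty hd (value_mem_VS hi)).ne_empty⟩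

lemma chainTree_size_le : (chainTree S).size ≤ nPar S * (kPar S + 1) + 1 := by
  refine Nat.succ_le_succ ?_
  calc spineNode S (nPar S) ≤ ∑ _x ∈ Finset.range (nPar S), (1 + kPar S) :=
        Finset.sum_le_sum fun x hx =>
          Nat.add_le_add_left (fanout_le_kPar (Finset.mem_range.mp hx)) 1
    _ = nPar S * (kPar S + 1) := by simp [add_comm]

end ChainTree

theorem statement_7_general (S : Finset Rule) (hd : dPar S = 1) :
    (∃ G : DGraph, TreeSolvesSR S G ∧ G.size ≤ kPar S + 1) ∧
    (∃ G : DGraph, TreeSolvesESR S G ∧ G.size ≤ nPar S * (kPar S + 1) + 1) ∧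
    L_SR S ≤ kPar S + 1 ∧ L_ESR S ≤ nPar S * (kPar S + 1) + 1 := by
  obtain ⟨a, ha⟩ := attrs_nonempty_of_dPar_eq_one hd
  have hstar : TreeSolvesSR S (starTree S a) :=
    ⟨starTree_isDG ha, starTree_isTree, starTree_solvesSR hd ha⟩
  have hchain : TreeSolvesESR S (chainTree S) :=
    ⟨chainTree_isDG, chainTree_isTree, chainTree_solvesSR hd⟩
  exact ⟨⟨_, hstar, starTree_size_le ha⟩, ⟨_, hchain, chainTree_size_le⟩,
    le_trans (Nat.sInf_le ⟨_, hstar, rfl⟩) (starTree_size_le ha),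
    le_trans (Nat.sInf_le ⟨_, hchain, rfl⟩) chainTree_size_le⟩

/-- Lemma 13: if d(S) = 1, then there is an o-decision tree over S solving SR(S) with
at most k(S) + 1 nodes and an e-decision tree over S solving ESR(S) with at most
n(S)·(k(S) + 1) + 1 nodes; in particular L_SR(S) ≤ k(S) + 1 and
L_ESR(S) ≤ n(S)·(k(S) + 1) + 1. -/
theorem statement_7 (S : Finset Rule) (hS : S.Nonempty) (hwf : ∀ r ∈ S, r.WF)
    (hd : dPar S = 1) :
    (∃ G : DGraph, TreeSolvesSR S G ∧ G.size ≤ kPar S + 1) ∧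
    (∃ G : DGraph, TreeSolvesESR S G ∧ G.size ≤ nPar S * (kPar S + 1) + 1) ∧
    L_SR S ≤ kPar S + 1 ∧ L_ESR S ≤ nPar S * (kPar S + 1) + 1 :=
  statement_7_general S hd

end DRS

end
end
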